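/- There exists a unique k-algebra homomorphism σ : A → M₂(A) with σ(x₁) = h·[[x₁+x₂, x₁],[x₂, 0]] and σ(x₂) = h·[[0, x₁],[−x₂, −x₁+x₂]]; equivalently, σ(x₁)·σ(x₂) + σ(x₂)·σ(x₁) = 0 in M₂(A). Moreover, for each pair (i, j) ∈ {1,2}², the entry map σᵢⱼ : A → A, r ↦ σ(r)ᵢⱼ, is not a k-algebra homomorphism: indeed σᵢⱼ(x₁²) ≠ (σᵢⱼ(x₁))². -/

import Mathlib

/-- The defining relation of `A = k⟨x₁,x₂⟩/(x₁x₂ + x₂x₁)`. -/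
def aRel (k : Type*) [Field k] :
    FreeAlgebra k (Fin 2) → FreeAlgebra k (Fin 2) → Prop := fun a b =>
  a = FreeAlgebra.ι k 0 * FreeAlgebra.ι k 1 + FreeAlgebra.ι k 1 * FreeAlgebra.ι k 0 ∧ b = 0

/-- The algebra `A = k⟨x₁,x₂⟩/(x₁x₂ + x₂x₁)`. -/
abbrev Aq (k : Type*) [Field k] := RingQuot (aRel k)

/-- The generator `x₁` of `A`. -/
def aX₁ (k : Type*) [Field k] : Aq k :=
  RingQuot.mkAlgHom k (aRel k) (FreeAlgebra.ι k 0)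

/-- The generator `x₂` of `A`. -/
def aX₂ (k : Type*) [Field k] : Aq k :=
  RingQuot.mkAlgHom k (aRel k) (FreeAlgebra.ι k 1)

/-!
Since `x₁x₂ + x₂x₁ = 0` is the only relation of `A`, an algebra map out of `A` is the same as a
pair of anticommuting elements. For `x, y` anticommuting in any ring, the matrices
`S₁ = [[x+y, x], [y, 0]]` and `S₂ = [[0, x], [-y, -x+y]]` satisfy
`S₁S₂ + S₂S₁ = [[0, xy+yx], [-(xy+yx), 0]] = 0`, which gives `σ`. Entrywise,
`(S₁²)ᵢⱼ - (S₁)ᵢⱼ²` is `xy, yx, yx, yx`, so every entry map fails to be multiplicative on `x₁²`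
because `x₁x₂ ≠ 0` in `A`; the last fact is seen in the representation
`x₁ ↦ diag(1, -1)`, `x₂ ↦ [[0, 1], [1, 0]]` of `A` on `k²`.
-/

namespace Aq

variable {k : Type*} [Field k]

theorem aX₁_mul_aX₂_add_aX₂_mul_aX₁ : aX₁ k * aX₂ k + aX₂ k * aX₁ k = 0 := by
  simpa only [aX₁, aX₂, map_add, map_mul, map_zero] using
    RingQuot.mkAlgHom_rel k (s := aRel k) ⟨rfl, rfl⟩

section lift

variable {B : Type*} [Semiring B] [Algebra k B]

noncomputable def lift (a b : B) (hab : a * b + b * a = 0) : Aq k →ₐ[k] B :=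
  RingQuot.liftAlgHom k ⟨FreeAlgebra.lift k ![a, b], by
    rintro _ _ ⟨rfl, rfl⟩
    simpa only [map_add, map_mul, map_zero, FreeAlgebra.lift_ι_apply, Matrix.cons_val_zero,
      Matrix.cons_val_one] using hab⟩

variable (a b : B) (hab : a * b + b * a = 0)

@[simp]
theorem lift_aX₁ : lift a b hab (aX₁ k) = a := by
  simp [lift, aX₁]

@[simp]
theorem lift_aX₂ : lift a b hab (aX₂ k) = b := by
  simp [lift, aX₂]

theorem algHom_ext {f g : Aq k →ₐ[k] B} (h₁ : f (aX₁ k) = g (aX₁ k))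
    (h₂ : f (aX₂ k) = g (aX₂ k)) : f = g := by
  apply RingQuot.ringQuot_ext'
  refine FreeAlgebra.hom_ext (funext fun i => ?_)
  fin_cases i
  exacts [h₁, h₂]

end lift

theorem aX₁_mul_aX₂_ne_zero : aX₁ k * aX₂ k ≠ 0 := by
  have hanti : !![(1 : k), 0; 0, -1] * !![0, 1; 1, 0] + !![0, 1; 1, 0] * !![1, 0; 0, -1] = 0 := by
    rw [Matrix.eta_fin_two 0]
    simp
  intro h
  have := congrFun (congrFun (congrArg (lift _ _ hanti) h) 0) 1
  simp at this

end Aq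

section sigmaMat

variable {R : Type*} [Ring R] {x y : R}

variable (x y) in
def sigmaMat₁ : Matrix (Fin 2) (Fin 2) R := !![x + y, x; y, 0]

variable (x y) in
def sigmaMat₂ : Matrix (Fin 2) (Fin 2) R := !![0, x; -y, -x + y]

theorem sigmaMat₁_mul_sigmaMat₂_add_sigmaMat₂_mul_sigmaMat₁ (hxy : x * y + y * x = 0) :
    sigmaMat₁ x y * sigmaMat₂ x y + sigmaMat₂ x y * sigmaMat₁ x y = 0 := by
  have : sigmaMat₁ x y * sigmaMat₂ x y + sigmaMat₂ x y * sigmaMat₁ x y =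
      !![0, x * y + y * x; -(x * y + y * x), 0] := by
    simp only [sigmaMat₁, sigmaMat₂, Matrix.mul_fin_two, Matrix.of_add_of]
    congr; ext i j; fin_cases i <;> fin_cases j <;> simp <;> noncomm_ring
  rw [this, hxy, neg_zero, Matrix.eta_fin_two 0]
  rfl

theorem sigmaMat₁_mul_self_apply_ne (hxy : x * y + y * x = 0) (hxy₀ : x * y ≠ 0) (i j : Fin 2) :
    (sigmaMat₁ x y * sigmaMat₁ x y) i j ≠ sigmaMat₁ x y i j * sigmaMat₁ x y i j := by
  have hyx₀ : y * x ≠ 0 := by rwa [eq_neg_of_add_eq_zero_right hxy, neg_ne_zero]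
  fin_cases i <;> fin_cases j <;> simp [sigmaMat₁, Matrix.mul_apply, add_mul, mul_add, hxy₀, hyx₀]

end sigmaMat

theorem smul_mul_smul_add_smul_mul_smul_eq_zero {k A : Type*} [CommSemiring k] [Semiring A]
    [Algebra k A] (c : k) {a b : A} (hab : a * b + b * a = 0) :
    (c • a) * (c • b) + (c • b) * (c • a) = 0 := by
  rw [smul_mul_smul_comm, smul_mul_smul_comm, ← smul_add, hab, smul_zero]

theorem Matrix.smul_mul_smul_apply_ne {k A n : Type*} [Field k] [Ring A] [Algebra k A]
    [Fintype n] {M : Matrix n n A} {c : k}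
    (hc : c ≠ 0) {i j : n} (hM : (M * M) i j ≠ M i j * M i j) :
    ((c • M) * (c • M)) i j ≠ (c • M) i j * (c • M) i j := by
  simp only [smul_mul_smul_comm, Matrix.smul_apply]
  exact (smul_right_injective A (mul_ne_zero hc hc)).ne hM

/-- There is a unique `k`-algebra homomorphism `σ : A → M₂(A)` with
`σ(x₁) = h·[[x₁+x₂, x₁],[x₂, 0]]` and `σ(x₂) = h·[[0, x₁],[−x₂, −x₁+x₂]]`
(equivalently, the two prescribed matrices anticommute), and none of its four entry
maps `σᵢⱼ` is a `k`-algebra homomorphism: `σᵢⱼ(x₁²) ≠ (σᵢⱼ(x₁))²`. -/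
theorem sigma_matrix_algHom (k : Type*) [Field k] (h : k) (hh : h ≠ 0) :
    ((h • !![aX₁ k + aX₂ k, aX₁ k; aX₂ k, 0] : Matrix (Fin 2) (Fin 2) (Aq k)) *
        (h • !![0, aX₁ k; -aX₂ k, -aX₁ k + aX₂ k]) +
      (h • !![0, aX₁ k; -aX₂ k, -aX₁ k + aX₂ k] : Matrix (Fin 2) (Fin 2) (Aq k)) *
        (h • !![aX₁ k + aX₂ k, aX₁ k; aX₂ k, 0]) = 0) ∧
    (∃! σ : Aq k →ₐ[k] Matrix (Fin 2) (Fin 2) (Aq k),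
      σ (aX₁ k) = h • !![aX₁ k + aX₂ k, aX₁ k; aX₂ k, 0] ∧
      σ (aX₂ k) = h • !![0, aX₁ k; -aX₂ k, -aX₁ k + aX₂ k]) ∧
    (∀ σ : Aq k →ₐ[k] Matrix (Fin 2) (Fin 2) (Aq k),
      (σ (aX₁ k) = h • !![aX₁ k + aX₂ k, aX₁ k; aX₂ k, 0] ∧
       σ (aX₂ k) = h • !![0, aX₁ k; -aX₂ k, -aX₁ k + aX₂ k]) →
      ∀ i j : Fin 2, σ (aX₁ k * aX₁ k) i j ≠ σ (aX₁ k) i j * σ (aX₁ k) i j) := by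
  have hrel := Aq.aX₁_mul_aX₂_add_aX₂_mul_aX₁ (k := k)
  have hanti : (h • sigmaMat₁ (aX₁ k) (aX₂ k)) * (h • sigmaMat₂ (aX₁ k) (aX₂ k)) +
      (h • sigmaMat₂ (aX₁ k) (aX₂ k)) * (h • sigmaMat₁ (aX₁ k) (aX₂ k)) = 0 :=
    smul_mul_smul_add_smul_mul_smul_eq_zero h
      (sigmaMat₁_mul_sigmaMat₂_add_sigmaMat₂_mul_sigmaMat₁ hrel)
  refine ⟨hanti, ⟨Aq.lift _ _ hanti, ⟨Aq.lift_aX₁ .., Aq.lift_aX₂ ..⟩, ?_⟩, ?_⟩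
  · rintro τ ⟨h₁, h₂⟩
    exact Aq.algHom_ext (h₁.trans (Aq.lift_aX₁ ..).symm) (h₂.trans (Aq.lift_aX₂ ..).symm)
  · rintro σ ⟨h₁, -⟩ i j
    rw [map_mul, h₁]
    exact Matrix.smul_mul_smul_apply_ne hh
      (sigmaMat₁_mul_self_apply_ne hrel Aq.aX₁_mul_aX₂_ne_zero i j)
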